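/- Let P = 𝔽₂[y₁, y₂, y₃, b₁, b₂, z] be the polynomial ring over the field with two elements in six variables, let I ⊆ P be the ideal generated by y₁y₂, y₁y₃, y₂y₃, y₃², y₂b₁, y₃b₁, y₁b₂, y₃b₂, b₁b₂, b₁² + y₁²z, b₂² + y₂²z, and let A = P/I. Then the image in A of the element k = z + b₁ + y₁² + b₂ + y₂² is not a zero divisor: for every a ∈ A, if k·a = 0 then a = 0. -/

import Mathlib

noncomputable section

open MvPolynomial

/-- The polynomial ring `𝔽₂[y₁, y₂, y₃, b₁, b₂, z]`. -/
abbrev P : Type := MvPolynomial (Fin 6) (ZMod 2)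

def y₁ : P := X 0
def y₂ : P := X 1
def y₃ : P := X 2
def b₁ : P := X 3
def b₂ : P := X 4
def z : P := X 5

/-- The ideal `I = (y₁y₂, y₁y₃, y₂y₃, y₃², y₂b₁, y₃b₁, y₁b₂, y₃b₂, b₁b₂, b₁²+y₁²z, b₂²+y₂²z)`. -/
def I6 : Ideal P :=
  Ideal.span {y₁ * y₂, y₁ * y₃, y₂ * y₃, y₃ ^ 2, y₂ * b₁, y₃ * b₁, y₁ * b₂, y₃ * b₂, b₁ * b₂,
    b₁ ^ 2 + y₁ ^ 2 * z, b₂ ^ 2 + y₂ ^ 2 * z}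

/-- The quotient ring `A = P/I`. -/
abbrev A : Type := P ⧸ I6

/-- The element `k = z + b₁ + y₁² + b₂ + y₂²`. -/
def k : P := z + b₁ + y₁ ^ 2 + b₂ + y₂ ^ 2

/-!
Geometrically, `A` is the coordinate ring of two Whitney umbrellas `bᵢ² = yᵢ² z` and of the
doubled `z`-line `y₃² = 0`, glued along the `z`-axis. Normalising each umbrella by
`yᵢ ↦ s, bᵢ ↦ s t, z ↦ t²` and sending `y₃ ↦ ε, z ↦ T` gives an algebra map
`A → 𝔽₂[s, t] × 𝔽₂[s, t] × 𝔽₂[T][ε]`. It is injective, because an additive left inverse reads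
an element of `A` back off its normal monomials `yᵢ^a bᵢ^(0 or 1) z^f` and `y₃^(0 or 1) z^f`.
The image of `k` is `(s² + s t + t², s² + s t + t², T)`, a non-zero-divisor in every factor.
-/

open TrivSqZeroExt

local notation "π" => Ideal.Quotient.mk I6

section

variable {K R : Type*} [CommRing K] [CommRing R] [Algebra K R]

lemma pow_eq_of_sq_eq_sq_mul {Y B Z : R} (hB : B ^ 2 = Y ^ 2 * Z) (d : ℕ) :
    B ^ d = Y ^ (2 * (d / 2)) * B ^ (d % 2) * Z ^ (d / 2) := by
  conv_lhs => rw [← Nat.div_add_mod d 2, pow_add, pow_mul, hB]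
  ring

variable (K) in
/-- With `s = X 0`, `t = X 1`: a left inverse of `Y ↦ s, B ↦ s t, Z ↦ t²` on the monomials
divisible by `Y` or `B`. Pure powers of `t` come from the `z`-axis, which is read off the doubled
line instead. -/
def umbrellaSection (Y B Z : R) : MvPolynomial (Fin 2) K →ₗ[K] R :=
  (basisMonomials (Fin 2) K).constr K fun u =>
    if u 0 = 0 then 0 else Y ^ (u 0 - u 1 % 2) * B ^ (u 1 % 2) * Z ^ (u 1 / 2)

lemma umbrellaSection_X_pow_mul_X_pow (Y B Z : R) (α β : ℕ) :
    umbrellaSection K Y B Z (X 0 ^ α * X 1 ^ β) =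
      if α = 0 then 0 else Y ^ (α - β % 2) * B ^ (β % 2) * Z ^ (β / 2) := by
  rw [X_pow_eq_monomial, X_pow_eq_monomial, monomial_mul, one_mul, umbrellaSection,
    ← congrFun (coe_basisMonomials (Fin 2) K), Module.Basis.constr_basis]
  simp

lemma umbrellaSection_X_one_pow (Y B Z : R) (β : ℕ) : umbrellaSection K Y B Z (X 1 ^ β) = 0 := by
  simpa using umbrellaSection_X_pow_mul_X_pow (K := K) Y B Z 0 β

lemma umbrellaSection_param {Y B Z : R} (hB : B ^ 2 = Y ^ 2 * Z) {a d : ℕ} (had : a ≠ 0 ∨ d ≠ 0)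
    (f : ℕ) : umbrellaSection K Y B Z (X 0 ^ a * (X 0 * X 1) ^ d * (X 1 ^ 2) ^ f) =
      Y ^ a * B ^ d * Z ^ f := by
  rw [show (X 0 ^ a * (X 0 * X 1) ^ d * (X 1 ^ 2) ^ f : MvPolynomial (Fin 2) K) =
      X 0 ^ (a + d) * X 1 ^ (d + 2 * f) by ring, umbrellaSection_X_pow_mul_X_pow, if_neg (by omega),
    show a + d - (d + 2 * f) % 2 = a + 2 * (d / 2) by omega, show (d + 2 * f) % 2 = d % 2 by omega,
    show (d + 2 * f) / 2 = d / 2 + f by omega, pow_eq_of_sq_eq_sq_mul hB d]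
  ring

variable (K) in
def dualLineSection (Y Z : R) : DualNumber (Polynomial K) →ₗ[K] R where
  toFun x := Polynomial.aeval Z x.fst + Y * Polynomial.aeval Z x.snd
  map_add' x y := by simp only [fst_add, snd_add, map_add]; ring
  map_smul' c x := by simp

lemma dualLineSection_inl (Y Z : R) (q : Polynomial K) :
    dualLineSection K Y Z (inl q) = Polynomial.aeval Z q := by
  simp [dualLineSection]

lemma dualLineSection_eps_mul_inl (Y Z : R) (q : Polynomial K) :
    dualLineSection K Y Z (DualNumber.eps * inl q) = Y * Polynomial.aeval Z q := by
  rw [DualNumber.eps, inr_mul_inl]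
  simp [dualLineSection]

end

lemma DualNumber.eq_zero_of_inl_mul_eq_zero {R : Type*} [CommRing R] {r : R}
    (hr : r ∈ nonZeroDivisors R) {x : DualNumber R} (h : inl r * x = 0) : x = 0 := by
  rw [inl_mul_eq_smul] at h
  ext
  · simpa [mul_left_mem_nonZeroDivisors_eq_zero_iff hr] using congrArg fst h
  · simpa [mul_left_mem_nonZeroDivisors_eq_zero_iff hr] using congrArg snd h

lemma pow_mul_pow_mem_span_pair {S : Type*} [CommSemiring S] (x y : S) {a d : ℕ}
    (had : a ≠ 0 ∨ d ≠ 0) : x ^ a * y ^ d ∈ Ideal.span {x, y} := by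
  rcases had with h | h
  · exact Ideal.mul_mem_right _ _ <|
      Ideal.pow_mem_of_mem _ (Ideal.subset_span (by simp)) a (Nat.pos_of_ne_zero h)
  · exact Ideal.mul_mem_left _ _ <|
      Ideal.pow_mem_of_mem _ (Ideal.subset_span (by simp)) d (Nat.pos_of_ne_zero h)

lemma span_mul_span_le_I6 {S T : Set P} (h : ∀ x ∈ S, ∀ y ∈ T, x * y ∈ I6) :
    Ideal.span S * Ideal.span T ≤ I6 := by
  rw [Ideal.span_mul_span', Ideal.span_le]
  rintro _ ⟨x, hx, y, hy, rfl⟩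
  exact h x hx y hy

lemma span_y₁_b₁_mul_span_y₂_b₂_le : Ideal.span {y₁, b₁} * Ideal.span {y₂, b₂} ≤ I6 :=
  span_mul_span_le_I6 (by
    rintro _ (rfl | rfl) _ (rfl | rfl) <;> apply Ideal.subset_span <;> simp [mul_comm])

lemma span_y₁_b₁_mul_span_y₃_le : Ideal.span {y₁, b₁} * Ideal.span {y₃} ≤ I6 :=
  span_mul_span_le_I6 (by
    rintro _ (rfl | rfl) _ rfl <;> apply Ideal.subset_span <;> simp [mul_comm])

lemma span_y₂_b₂_mul_span_y₃_le : Ideal.span {y₂, b₂} * Ideal.span {y₃} ≤ I6 :=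
  span_mul_span_le_I6 (by
    rintro _ (rfl | rfl) _ rfl <;> apply Ideal.subset_span <;> simp [mul_comm])

lemma sq_b₁ : π b₁ ^ 2 = π y₁ ^ 2 * π z := by
  rw [← map_pow, ← map_pow, ← map_mul, Ideal.Quotient.eq, CharTwo.sub_eq_add]
  exact Ideal.subset_span (by simp)

lemma sq_b₂ : π b₂ ^ 2 = π y₂ ^ 2 * π z := by
  rw [← map_pow, ← map_pow, ← map_mul, Ideal.Quotient.eq, CharTwo.sub_eq_add]
  exact Ideal.subset_span (by simp)

abbrev Umbrella : Type := MvPolynomial (Fin 2) (ZMod 2)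

abbrev DoubledLine : Type := DualNumber (Polynomial (ZMod 2))

abbrev Branches : Type := Umbrella × Umbrella × DoubledLine

def toBranches : P →ₐ[ZMod 2] Branches :=
  (aeval ![X 0, 0, 0, X 0 * X 1, 0, X 1 ^ 2]).prod
    ((aeval ![0, X 0, 0, 0, X 0 * X 1, X 1 ^ 2]).prod
      (aeval ![0, 0, DualNumber.eps, 0, 0, inl Polynomial.X]))

def ofBranches : Branches →ₗ[ZMod 2] A :=
  (umbrellaSection (ZMod 2) (π y₁) (π b₁) (π z)).coprod
    ((umbrellaSection (ZMod 2) (π y₂) (π b₂) (π z)).coprod (dualLineSection (ZMod 2) (π y₃) (π z)))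

@[simp] lemma toBranches_y₁ : toBranches y₁ = (X 0, 0, 0) := by
  simp [toBranches, y₁]

@[simp] lemma toBranches_y₂ : toBranches y₂ = (0, X 0, 0) := by
  simp [toBranches, y₂]

@[simp] lemma toBranches_y₃ : toBranches y₃ = (0, 0, DualNumber.eps) := by
  simp [toBranches, y₃]

@[simp] lemma toBranches_b₁ : toBranches b₁ = (X 0 * X 1, 0, 0) := by
  simp [toBranches, b₁]

@[simp] lemma toBranches_b₂ : toBranches b₂ = (0, X 0 * X 1, 0) := by
  simp [toBranches, b₂]

@[simp] lemma toBranches_z : toBranches z = (X 1 ^ 2, X 1 ^ 2, inl Polynomial.X) := by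
  simp [toBranches, z]

lemma I6_le_ker_toBranches : I6 ≤ RingHom.ker toBranches := by
  rw [I6, Ideal.span_le]
  intro x hx
  simp only [Set.mem_insert_iff, Set.mem_singleton_iff] at hx
  rcases hx with rfl|rfl|rfl|rfl|rfl|rfl|rfl|rfl|rfl|rfl|rfl <;> simp
  all_goals rw [mul_pow]; exact CharTwo.add_self_eq_zero _

lemma ofBranches_toBranches_of_mem {p : P} (hp : p ∈ I6) : ofBranches (toBranches p) = π p := by
  rw [RingHom.mem_ker.1 (I6_le_ker_toBranches hp), map_zero]
  exact (Ideal.Quotient.eq_zero_iff_mem.2 hp).symm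

lemma ofBranches_toBranches_umbrella₁ {a d : ℕ} (had : a ≠ 0 ∨ d ≠ 0) (f : ℕ) :
    ofBranches (toBranches (y₁ ^ a * b₁ ^ d * z ^ f)) = π (y₁ ^ a * b₁ ^ d * z ^ f) := by
  rcases id had with h | h <;> simp [ofBranches, zero_pow h, umbrellaSection_param sq_b₁ had]

lemma ofBranches_toBranches_umbrella₂ {b e : ℕ} (hbe : b ≠ 0 ∨ e ≠ 0) (f : ℕ) :
    ofBranches (toBranches (y₂ ^ b * b₂ ^ e * z ^ f)) = π (y₂ ^ b * b₂ ^ e * z ^ f) := by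
  rcases id hbe with h | h <;> simp [ofBranches, zero_pow h, umbrellaSection_param sq_b₂ hbe]

lemma ofBranches_toBranches_doubledLine {c : ℕ} (hc : c ≤ 1) (f : ℕ) :
    ofBranches (toBranches (y₃ ^ c * z ^ f)) = π (y₃ ^ c * z ^ f) := by
  interval_cases c
  · simp [ofBranches, umbrellaSection_X_one_pow, ← pow_mul, dualLineSection_inl]
  · simp [ofBranches, dualLineSection_eps_mul_inl]

lemma monomial_one_eq (u : Fin 6 →₀ ℕ) :
    monomial u 1 = y₁ ^ u 0 * b₁ ^ u 3 * (y₂ ^ u 1 * b₂ ^ u 4) * y₃ ^ u 2 * z ^ u 5 := by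
  rw [monomial_eq, Finsupp.prod_fintype _ _ (fun _ => pow_zero _), Fin.prod_univ_six]
  simp only [C_1, one_mul, y₁, y₂, y₃, b₁, b₂, z]
  ring

lemma ofBranches_toBranches_monomial (u : Fin 6 →₀ ℕ) :
    ofBranches (toBranches (monomial u 1)) = π (monomial u 1) := by
  rw [monomial_one_eq]
  generalize u 0 = a, u 1 = b, u 2 = c, u 3 = d, u 4 = e, u 5 = f
  have of_dvd {x m : P} (hx : x ∈ I6) (h : x ∣ m) : ofBranches (toBranches m) = π m :=
    ofBranches_toBranches_of_mem (Ideal.mem_of_dvd _ h hx)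
  have hy₃ := Ideal.mem_span_singleton_self y₃
  by_cases h₁ : a = 0 ∧ d = 0 <;> by_cases h₂ : b = 0 ∧ e = 0
  · obtain ⟨rfl, rfl⟩ := h₁
    obtain ⟨rfl, rfl⟩ := h₂
    rcases c with _ | _ | c
    · simpa using ofBranches_toBranches_doubledLine zero_le_one f
    · simpa using ofBranches_toBranches_doubledLine le_rfl f
    · exact of_dvd (x := y₃ ^ 2) (Ideal.subset_span (by simp)) ⟨y₃ ^ c * z ^ f, by ring⟩
  · obtain ⟨rfl, rfl⟩ := h₁
    have hbe : b ≠ 0 ∨ e ≠ 0 := by tauto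
    rcases c with _ | c
    · simpa using ofBranches_toBranches_umbrella₂ hbe f
    · exact of_dvd (span_y₂_b₂_mul_span_y₃_le <|
        Ideal.mul_mem_mul (pow_mul_pow_mem_span_pair y₂ b₂ hbe) hy₃) ⟨y₃ ^ c * z ^ f, by ring⟩
  · obtain ⟨rfl, rfl⟩ := h₂
    have had : a ≠ 0 ∨ d ≠ 0 := by tauto
    rcases c with _ | c
    · simpa using ofBranches_toBranches_umbrella₁ had f
    · exact of_dvd (span_y₁_b₁_mul_span_y₃_le <|
        Ideal.mul_mem_mul (pow_mul_pow_mem_span_pair y₁ b₁ had) hy₃) ⟨y₃ ^ c * z ^ f, by ring⟩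
  · have had : a ≠ 0 ∨ d ≠ 0 := by tauto
    have hbe : b ≠ 0 ∨ e ≠ 0 := by tauto
    exact of_dvd (span_y₁_b₁_mul_span_y₂_b₂_le <| Ideal.mul_mem_mul
      (pow_mul_pow_mem_span_pair y₁ b₁ had) (pow_mul_pow_mem_span_pair y₂ b₂ hbe))
      ⟨y₃ ^ c * z ^ f, by ring⟩

lemma ofBranches_toBranches (p : P) : ofBranches (toBranches p) = π p := by
  have h : ofBranches ∘ₗ toBranches.toLinearMap = (Ideal.Quotient.mkₐ (ZMod 2) I6).toLinearMap :=
    (basisMonomials (Fin 6) (ZMod 2)).ext fun u => by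
      simpa [coe_basisMonomials] using ofBranches_toBranches_monomial u
  simpa using LinearMap.congr_fun h p

def liftBranches : A →ₐ[ZMod 2] Branches :=
  Ideal.Quotient.liftₐ I6 toBranches fun _ hp => RingHom.mem_ker.1 (I6_le_ker_toBranches hp)

@[simp] lemma liftBranches_mk (p : P) : liftBranches (π p) = toBranches p := rfl

lemma liftBranches_injective : Function.Injective liftBranches := by
  refine Function.LeftInverse.injective (g := ofBranches) fun a => ?_
  obtain ⟨p, rfl⟩ := Ideal.Quotient.mk_surjective a
  simpa using ofBranches_toBranches p

lemma toBranches_k : toBranches k =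
    (X 1 ^ 2 + X 0 * X 1 + X 0 ^ 2, X 1 ^ 2 + X 0 * X 1 + X 0 ^ 2, inl Polynomial.X) := by
  simp [k]

lemma eq_zero_of_toBranches_k_mul_eq_zero {w : Branches} (h : toBranches k * w = 0) : w = 0 := by
  have hq : (X 1 ^ 2 + X 0 * X 1 + X 0 ^ 2 : Umbrella) ≠ 0 := fun h =>
    by simpa using congrArg (eval ![1, 0]) h
  obtain ⟨w₁, w₂, w₃⟩ := w
  simp only [toBranches_k, Prod.mk_mul_mk, Prod.mk_eq_zero, mul_eq_zero, hq, false_or] at h ⊢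
  exact ⟨h.1, h.2.1, DualNumber.eq_zero_of_inl_mul_eq_zero
    (mem_nonZeroDivisors_of_ne_zero (M₀ := Polynomial (ZMod 2)) Polynomial.X_ne_zero) h.2.2⟩

/-- The image of `k` in `A = P/I` is not a zero divisor. -/
theorem stmt18 (a : A) (h : Ideal.Quotient.mk I6 k * a = 0) : a = 0 := by
  apply liftBranches_injective
  rw [map_zero]
  apply eq_zero_of_toBranches_k_mul_eq_zero
  simpa using congrArg liftBranches h

end
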